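/- For the lattice L with Gram matrix [[4,6],[6,4]], there is no isometry f of L⊗ℚ preserving L with f(h₁) = h₂ that induces ±identity on the discriminant group L*/L. -/
import Mathlib


/-- The dual lattice of the lattice `L = ℤh₁ ⊕ ℤh₂` with Gram matrix `[[4,6],[6,4]]`,
inside `ℚ²`. -/
def dualLattice46 : Submodule ℤ (Fin 2 → ℚ) where
  carrier := {x | (∃ n : ℤ, 4 * x 0 + 6 * x 1 = (n : ℚ)) ∧
    (∃ m : ℤ, 6 * x 0 + 4 * x 1 = (m : ℚ))}
  add_mem' := by
    rintro a b ⟨⟨n1, ha1⟩, ⟨m1, ha2⟩⟩ ⟨⟨n2, hb1⟩, ⟨m2, hb2⟩⟩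
    refine ⟨⟨n1 + n2, ?_⟩, ⟨m1 + m2, ?_⟩⟩ <;>
      · simp only [Pi.add_apply]; push_cast; linarith
  zero_mem' := ⟨⟨0, by simp⟩, ⟨0, by simp⟩⟩
  smul_mem' := by
    rintro c x ⟨⟨n, h1⟩, ⟨m, h2⟩⟩
    refine ⟨⟨c * n, ?_⟩, ⟨c * m, ?_⟩⟩ <;>
      · simp only [Pi.smul_apply, zsmul_eq_mul]; push_cast
        first
        | linear_combination (c : ℚ) * h1
        | linear_combination (c : ℚ) * h2

/-- The lattice `L = ℤh₁ ⊕ ℤh₂` itself, inside `ℚ²`. -/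
def stdLattice46 : Submodule ℤ (Fin 2 → ℚ) :=
  Submodule.span ℤ {![1, 0], ![0, 1]}


lemma stdLattice46_int : ∀ x ∈ stdLattice46, ∃ n : ℤ, x 0 = (n : ℚ) := by
  intro x hx
  induction hx using Submodule.span_induction with
  | mem v hv =>
    rcases hv with h | h
    · exact ⟨1, by rw [h]; norm_num⟩
    · exact ⟨0, by rw [h]; norm_num⟩
  | zero => exact ⟨0, by simp⟩
  | add a b _ _ ha hb =>
    obtain ⟨n, hn⟩ := ha; obtain ⟨m, hm⟩ := hb
    exact ⟨n + m, by simp [hn, hm]⟩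
  | smul c a _ ha =>
    obtain ⟨n, hn⟩ := ha
    exact ⟨c * n, by simp [hn]⟩

/-- For the lattice `L` with Gram matrix `[[4,6],[6,4]]`, there is no isometry `f`
of `L⊗ℚ` preserving `L` with `f(h₁) = h₂` that induces `±id` on the discriminant
group `L*/L` (i.e. such that `f x ∓ x ∈ L` for all `x ∈ L*`). -/
theorem stmt8 (f : (Fin 2 → ℚ) →ₗ[ℚ] (Fin 2 → ℚ))
    (hiso : ∀ v w : Fin 2 → ℚ,
      4 * f v 0 * f w 0 + 6 * f v 0 * f w 1 + 6 * f v 1 * f w 0 + 4 * f v 1 * f w 1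
        = 4 * v 0 * w 0 + 6 * v 0 * w 1 + 6 * v 1 * w 0 + 4 * v 1 * w 1)
    (hL : ∀ x ∈ stdLattice46, f x ∈ stdLattice46)
    (hf1 : f ![1, 0] = ![0, 1])
    (hpm : (∀ x ∈ dualLattice46, f x - x ∈ stdLattice46) ∨
           (∀ x ∈ dualLattice46, f x + x ∈ stdLattice46)) :
    False := by
  have hxd : (![(1:ℚ)/2, 0]) ∈ dualLattice46 := ⟨⟨2, by norm_num⟩, ⟨3, by norm_num⟩⟩
  have hx : (![(1:ℚ)/2, 0]) = ((1:ℚ)/2) • ![1, 0] := by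
    funext i; fin_cases i <;> simp
  have hfx : f ![(1:ℚ)/2, 0] = ((1:ℚ)/2) • ![0, 1] := by
    rw [hx, map_smul, hf1]
  rcases hpm with h | h
  · have := stdLattice46_int _ (h _ hxd)
    obtain ⟨n, hn⟩ := this
    rw [hfx] at hn
    simp [Matrix.cons_val_zero] at hn
    have : (2 * n : ℚ) = -1 := by linarith
    have : (2 * n : ℤ) = -1 := by exact_mod_cast this
    omega
  · have := stdLattice46_int _ (h _ hxd)
    obtain ⟨n, hn⟩ := this
    rw [hfx] at hn
    simp [Matrix.cons_val_zero] at hn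
    have : (2 * n : ℚ) = 1 := by linarith
    have : (2 * n : ℤ) = 1 := by exact_mod_cast this
    omega
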